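/- arXiv:2605.08760 — 3 statements merged into one kernel-verified Lean document; each statement's English description precedes it below -/
import Mathlib

section
/- Let E be a real inner product space and f : E → ℝ a differentiable function that is μ-strongly convex for some μ > 0, i.e. f(θ) ≥ f(θ') + ⟪∇f(θ'), θ − θ'⟫ + (μ/2)‖θ − θ'‖² for all θ, θ'. Let 0 < μ ≤ L, Δ > 0, α ∈ (0, 1/2), and let θ₀* ∈ E satisfy ∇f(θ₀*) = 0. If θ_j* ∈ E satisfies ‖θ_j* − θ₀*‖ ≥ Δ and θ_j ∈ E satisfies ‖θ_j − θ_j*‖ ≤ (1/2 − α)·√(μ/L)·Δ, then f(θ_j) ≥ f(θ₀*) + (μ/2)·(1/2 + α)²·Δ². -/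
open scoped RealInnerProductSpace

/-- First inequality chain in Lemma 1: by strong convexity and stable initialization,
the expected loss at `θⱼ` exceeds the optimal loss by at least `(μ/2)(1/2 + α)²Δ²`. -/
theorem strongConvex_loss_lower_bound {E : Type*} [NormedAddCommGroup E]
    [InnerProductSpace ℝ E] [CompleteSpace E]
    (f : E → ℝ) (μ L : ℝ) (hμ : 0 < μ) (hμL : μ ≤ L) (hf : Differentiable ℝ f)
    (hconv : ∀ θ θ' : E,
      f θ ≥ f θ' + ⟪gradient f θ', θ - θ'⟫ + (μ / 2) * ‖θ - θ'‖ ^ 2)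
    (Δ α : ℝ) (hΔ : 0 < Δ) (hα : α ∈ Set.Ioo (0 : ℝ) (1 / 2))
    (θ0star : E) (hstat : gradient f θ0star = 0)
    (θjstar θj : E)
    (hsep : ‖θjstar - θ0star‖ ≥ Δ)
    (hinit : ‖θj - θjstar‖ ≤ (1 / 2 - α) * Real.sqrt (μ / L) * Δ) :
    f θj ≥ f θ0star + (μ / 2) * (1 / 2 + α) ^ 2 * Δ ^ 2 := by
  obtain ⟨hα0, hα2⟩ := hα
  have hL : 0 < L := lt_of_lt_of_le hμ hμL
  have hsqrt : Real.sqrt (μ / L) ≤ 1 := by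
    rw [show (1:ℝ) = Real.sqrt 1 by simp]
    exact Real.sqrt_le_sqrt (by rw [div_le_one hL]; exact hμL)
  have h1 : ‖θj - θjstar‖ ≤ (1 / 2 - α) * Δ := by
    calc ‖θj - θjstar‖ ≤ (1 / 2 - α) * Real.sqrt (μ / L) * Δ := hinit
      _ ≤ (1 / 2 - α) * 1 * Δ := by
          apply mul_le_mul_of_nonneg_right _ hΔ.le
          exact mul_le_mul_of_nonneg_left hsqrt (by linarith)
      _ = (1 / 2 - α) * Δ := by ring
  have htri : ‖θjstar - θ0star‖ ≤ ‖θjstar - θj‖ + ‖θj - θ0star‖ := by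
    simpa [dist_eq_norm] using dist_triangle θjstar θj θ0star
  have hrev : ‖θjstar - θj‖ = ‖θj - θjstar‖ := norm_sub_rev _ _
  have hnorm : (1 / 2 + α) * Δ ≤ ‖θj - θ0star‖ := by linarith
  have hconv' := hconv θj θ0star
  rw [hstat] at hconv'
  simp only [inner_zero_left] at hconv'
  have hn0 : (0:ℝ) ≤ (1 / 2 + α) * Δ := by positivity
  nlinarith [sq_nonneg (‖θj - θ0star‖ - (1 / 2 + α) * Δ), norm_nonneg (θj - θ0star), mul_le_mul hnorm hnorm hn0 (norm_nonneg _)]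
end

section
/- Let E be a real inner product space and f : E → ℝ a differentiable function that is both μ-strongly convex (f(θ) ≥ f(θ') + ⟪∇f(θ'), θ − θ'⟫ + (μ/2)‖θ − θ'‖² for all θ, θ') and L-smooth (f(θ) ≤ f(θ') + ⟪∇f(θ'), θ − θ'⟫ + (L/2)‖θ − θ'‖² for all θ, θ'), with 0 < μ ≤ L. Let Δ > 0 and α ∈ (0, 1/2), let θ₀* ∈ E satisfy ∇f(θ₀*) = 0, and let θ_j* ∈ E satisfy ‖θ_j* − θ₀*‖ ≥ Δ. If θ₀, θ_j ∈ E satisfy ‖θ₀ − θ₀*‖ ≤ (1/2 − α)·√(μ/L)·Δ and ‖θ_j − θ_j*‖ ≤ (1/2 − α)·√(μ/L)·Δ, then f(θ_j) − f(θ₀) ≥ α·μ·Δ². -/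
/-!
Smoothness at the stationary point `θ₀*` bounds `f θ₀ - f θ₀*` by `(L/2) r²`, where
`r = (1/2 - α) √(μ/L) Δ` is the initialization radius, and `(L/2) r² = (μ/2) ((1/2 - α) Δ)²`.
Strong convexity at `θ₀*` bounds `f θⱼ - f θ₀*` below by `(μ/2) ‖θⱼ - θ₀*‖²`, and by the triangle
inequality `‖θⱼ - θ₀*‖ ≥ Δ - r ≥ (1/2 + α) Δ`. The difference of the two squares is exactly `αμΔ²`.
-/

open scoped RealInnerProductSpace

section QuadraticBounds

variable {E : Type*} [NormedAddCommGroup E] [InnerProductSpace ℝ E] [CompleteSpace E]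
  {f : E → ℝ} {x : E}

theorem sub_le_of_quadratic_upper_bound_of_gradient_eq_zero {L : ℝ}
    (hsmooth : ∀ θ, f θ ≤ f x + ⟪gradient f x, θ - x⟫ + (L / 2) * ‖θ - x‖ ^ 2)
    (hstat : gradient f x = 0) (θ : E) :
    f θ - f x ≤ (L / 2) * ‖θ - x‖ ^ 2 := by
  have := hsmooth θ
  rw [hstat, inner_zero_left] at this
  linarith

theorem le_sub_of_quadratic_lower_bound_of_gradient_eq_zero {μ : ℝ}
    (hconv : ∀ θ, f θ ≥ f x + ⟪gradient f x, θ - x⟫ + (μ / 2) * ‖θ - x‖ ^ 2)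
    (hstat : gradient f x = 0) (θ : E) :
    (μ / 2) * ‖θ - x‖ ^ 2 ≤ f θ - f x := by
  have := hconv θ
  rw [hstat, inner_zero_left] at this
  linarith

end QuadraticBounds

theorem loss_gap_lower_bound_general {E : Type*} [NormedAddCommGroup E]
    [InnerProductSpace ℝ E] [CompleteSpace E]
    (f : E → ℝ) (μ L : ℝ) (hμ : 0 < μ) (hμL : μ ≤ L)
    (hconv : ∀ θ θ' : E,
      f θ ≥ f θ' + ⟪gradient f θ', θ - θ'⟫ + (μ / 2) * ‖θ - θ'‖ ^ 2)
    (hsmooth : ∀ θ θ' : E,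
      f θ ≤ f θ' + ⟪gradient f θ', θ - θ'⟫ + (L / 2) * ‖θ - θ'‖ ^ 2)
    (Δ α : ℝ) (hΔ : 0 < Δ) (hα : α ∈ Set.Ioo (0 : ℝ) (1 / 2))
    (θ0star : E) (hstat : gradient f θ0star = 0)
    (θjstar : E) (hsep : ‖θjstar - θ0star‖ ≥ Δ)
    (θ0 θj : E)
    (hinit0 : ‖θ0 - θ0star‖ ≤ (1 / 2 - α) * Real.sqrt (μ / L) * Δ)
    (hinitj : ‖θj - θjstar‖ ≤ (1 / 2 - α) * Real.sqrt (μ / L) * Δ) :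
    f θj - f θ0 ≥ α * μ * Δ ^ 2 := by
  obtain ⟨hα0, hα2⟩ := hα
  have hL : 0 < L := hμ.trans_le hμL
  have hradius : (1 / 2 - α) * Real.sqrt (μ / L) * Δ ≤ (1 / 2 - α) * Δ := by
    have hsqrt : Real.sqrt (μ / L) ≤ 1 := Real.sqrt_le_one.mpr ((div_le_one hL).mpr hμL)
    have hcoef : 0 ≤ 1 / 2 - α := by linarith
    gcongr
    exact mul_le_of_le_one_right hcoef hsqrt
  have hupper : f θ0 - f θ0star ≤ (μ / 2) * ((1 / 2 - α) * Δ) ^ 2 := calc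
    f θ0 - f θ0star ≤ (L / 2) * ‖θ0 - θ0star‖ ^ 2 :=
      sub_le_of_quadratic_upper_bound_of_gradient_eq_zero (hsmooth · θ0star) hstat θ0
    _ ≤ (L / 2) * ((1 / 2 - α) * Real.sqrt (μ / L) * Δ) ^ 2 := by gcongr
    _ = (μ / 2) * ((1 / 2 - α) * Δ) ^ 2 := by
      rw [mul_pow, mul_pow, mul_pow, Real.sq_sqrt (by positivity)]
      field_simp
  have hdist : (1 / 2 + α) * Δ ≤ ‖θj - θ0star‖ := by
    have := norm_sub_le_norm_sub_add_norm_sub θjstar θj θ0star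
    rw [norm_sub_rev θjstar θj] at this
    linarith
  have hlower : (μ / 2) * ((1 / 2 + α) * Δ) ^ 2 ≤ f θj - f θ0star := calc
    (μ / 2) * ((1 / 2 + α) * Δ) ^ 2 ≤ (μ / 2) * ‖θj - θ0star‖ ^ 2 := by gcongr
    _ ≤ f θj - f θ0star :=
      le_sub_of_quadratic_lower_bound_of_gradient_eq_zero (hconv · θ0star) hstat θj
  linear_combination hupper + hlower

/-- Key deterministic separation bound in Lemma 1: under strong convexity,
smoothness, and stable initialization, `f(θⱼ) − f(θ₀) ≥ αμΔ²`. -/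
theorem loss_gap_lower_bound {E : Type*} [NormedAddCommGroup E]
    [InnerProductSpace ℝ E] [CompleteSpace E]
    (f : E → ℝ) (μ L : ℝ) (hμ : 0 < μ) (hμL : μ ≤ L) (hf : Differentiable ℝ f)
    (hconv : ∀ θ θ' : E,
      f θ ≥ f θ' + ⟪gradient f θ', θ - θ'⟫ + (μ / 2) * ‖θ - θ'‖ ^ 2)
    (hsmooth : ∀ θ θ' : E,
      f θ ≤ f θ' + ⟪gradient f θ', θ - θ'⟫ + (L / 2) * ‖θ - θ'‖ ^ 2)
    (Δ α : ℝ) (hΔ : 0 < Δ) (hα : α ∈ Set.Ioo (0 : ℝ) (1 / 2))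
    (θ0star : E) (hstat : gradient f θ0star = 0)
    (θjstar : E) (hsep : ‖θjstar - θ0star‖ ≥ Δ)
    (θ0 θj : E)
    (hinit0 : ‖θ0 - θ0star‖ ≤ (1 / 2 - α) * Real.sqrt (μ / L) * Δ)
    (hinitj : ‖θj - θjstar‖ ≤ (1 / 2 - α) * Real.sqrt (μ / L) * Δ) :
    f θj - f θ0 ≥ α * μ * Δ ^ 2 :=
  loss_gap_lower_bound_general f μ L hμ hμL hconv hsmooth Δ α hΔ hα θ0star hstat θjstar hsep θ0 θj
    hinit0 hinitj
end

section
/- (Lemma 1: misassignment probability bound for local data division.) Let (Ω, 𝒫) be a probability space, m ≥ 2, and for each j ∈ {0, 1, …, m−1} let ℓ_j : Ω → ℝ be a square-integrable random variable (the VAE loss of a sample from inherent distribution q₀ evaluated at the current parameter θ_j of component j) with mean a_j = 𝔼[ℓ_j] and variance Var(ℓ_j) ≤ η². Let α₀, …, α_{m−1} > 0 be prior mixture weights, s ∈ (0, 1], α ∈ (0, 1/2), μ > 0 and Δ > 0, and suppose for every j ≠ 0 the weighted mean gap satisfies α_j·a_j − α₀·a₀ ≥ s·(α·μ·Δ²)·(α₀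 + α_j). Then the probability that the sample is incorrectly assigned, P_err = 𝒫{ω : ∃ j ≠ 0, α_j·ℓ_j(ω) ≤ α₀·ℓ_0(ω)}, satisfies P_err ≤ 4·m·η² / (s²·α²·μ²·Δ⁴). -/
open MeasureTheory

/-- Lemma 1 of the paper: the probability that a sample drawn from inherent
distribution `q₀` is incorrectly assigned to some other component is at most
`4mη² / (s²α²μ²Δ⁴)`. -/
theorem misassignment_probability_bound {Ω : Type*} [MeasurableSpace Ω]
    (ℙ : Measure Ω) [IsProbabilityMeasure ℙ]
    (m : ℕ) (hm : 2 ≤ m) (ℓ : Fin m → Ω → ℝ)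
    (hℓ : ∀ j, MemLp (ℓ j) 2 ℙ)
    (η : ℝ) (hVar : ∀ j, ProbabilityTheory.variance (ℓ j) ℙ ≤ η ^ 2)
    (w : Fin m → ℝ) (hw : ∀ j, 0 < w j)
    (s : ℝ) (hs : s ∈ Set.Ioc (0 : ℝ) 1)
    (α : ℝ) (hα : α ∈ Set.Ioo (0 : ℝ) (1 / 2))
    (μ Δ : ℝ) (hμ : 0 < μ) (hΔ : 0 < Δ)
    (hgap : ∀ j : Fin m, j ≠ ⟨0, by omega⟩ →
      w j * (∫ ω, ℓ j ω ∂ℙ) - w ⟨0, by omega⟩ * (∫ ω, ℓ ⟨0, by omega⟩ ω ∂ℙ)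
        ≥ s * (α * μ * Δ ^ 2) * (w ⟨0, by omega⟩ + w j)) :
    ℙ {ω | ∃ j : Fin m, j ≠ ⟨0, by omega⟩ ∧
        w j * ℓ j ω ≤ w ⟨0, by omega⟩ * ℓ ⟨0, by omega⟩ ω}
      ≤ ENNReal.ofReal (4 * m * η ^ 2 / (s ^ 2 * α ^ 2 * μ ^ 2 * Δ ^ 4)) := by
  set z : Fin m := ⟨0, by omega⟩ with hz
  set G : ℝ := s * (α * μ * Δ ^ 2) with hG
  have hGpos : 0 < G := by
    have := hs.1; have := hα.1
    positivity
  set a : Fin m → ℝ := fun j => ∫ ω, ℓ j ω ∂ℙ with ha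
  -- the bad event is contained in the union of deviation events
  have hsub : {ω | ∃ j : Fin m, j ≠ z ∧ w j * ℓ j ω ≤ w z * ℓ z ω}
      ⊆ ⋃ j : Fin m, {ω | G ≤ |ℓ j ω - a j|} := by
    intro ω hω
    obtain ⟨j, hj, hle⟩ := hω
    by_cases h0 : G ≤ |ℓ z ω - a z|
    · exact Set.mem_iUnion.2 ⟨z, h0⟩
    · refine Set.mem_iUnion.2 ⟨j, ?_⟩
      push_neg at h0
      have h0' : ℓ z ω - a z < G := (abs_lt.1 h0).2
      have hgapj := hgap j hj
      have hwz := hw z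
      have hwj := hw j
      -- w z * ℓ z ω < w z * (a z + G)
      have h1 : w z * ℓ z ω < w z * a z + G * w z := by nlinarith
      have h2 : w z * a z + G * w z ≤ w j * a j - G * w j := by nlinarith
      have h3 : w j * ℓ j ω < w j * (a j - G) := by nlinarith
      have h4 : ℓ j ω < a j - G := lt_of_mul_lt_mul_left (by nlinarith) hwj.le
      have : G ≤ |ℓ j ω - a j| := by
        rw [abs_sub_comm]
        calc G ≤ a j - ℓ j ω := by linarith
        _ ≤ |a j - ℓ j ω| := le_abs_self _
      exact this
  calc ℙ {ω | ∃ j : Fin m, j ≠ z ∧ w j * ℓ j ω ≤ w z * ℓ z ω}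
      ≤ ℙ (⋃ j : Fin m, {ω | G ≤ |ℓ j ω - a j|}) := measure_mono hsub
    _ ≤ ∑ j : Fin m, ℙ {ω | G ≤ |ℓ j ω - a j|} := measure_iUnion_fintype_le _ _
    _ ≤ ∑ _j : Fin m, ENNReal.ofReal (η ^ 2 / G ^ 2) := by
        refine Finset.sum_le_sum fun j _ => ?_
        refine le_trans (ProbabilityTheory.meas_ge_le_variance_div_sq (hℓ j) hGpos) ?_
        exact ENNReal.ofReal_le_ofReal
          (div_le_div_of_nonneg_right (hVar j) (by positivity))
    _ = (m : ENNReal) * ENNReal.ofReal (η ^ 2 / G ^ 2) := by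
        simp [Finset.sum_const, nsmul_eq_mul]
    _ ≤ ENNReal.ofReal (4 * m * η ^ 2 / (s ^ 2 * α ^ 2 * μ ^ 2 * Δ ^ 4)) := by
        have hη2 : 0 ≤ η ^ 2 := le_trans (ProbabilityTheory.variance_nonneg _ _) (hVar z)
        rw [← ENNReal.ofReal_natCast m, ← ENNReal.ofReal_mul (by positivity)]
        refine ENNReal.ofReal_le_ofReal ?_
        have hG2 : G ^ 2 = s ^ 2 * α ^ 2 * μ ^ 2 * Δ ^ 4 := by ring
        rw [hG2]
        have hden : (0 : ℝ) < s ^ 2 * α ^ 2 * μ ^ 2 * Δ ^ 4 := by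
          have := hs.1; have := hα.1; positivity
        rw [mul_div_assoc'] at *
        exact div_le_div_of_nonneg_right (by nlinarith [Nat.cast_nonneg (α := ℝ) m]) hden.le
end
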